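/- The only proper nonempty subhypergroups of (H, +) are {a, A} and {b, B}; that is, if K is a nonempty subset of H with K ≠ H satisfying x + K = K + x = K for all x ∈ K, then K = {a, A} or K = {b, B}. -/
import Mathlib


inductive Hel : Type
  | a | b | A | B | C
deriving DecidableEq, Repr

open Hel

instance : Fintype Hel :=
  ⟨{a, b, A, B, C}, by intro x; cases x <;> decide⟩

def hop : Hel → Hel → Finset Hel
  | a, a => {a, A}
  | a, b => {a, b, C}
  | a, A => {a, A}
  | a, B => {a, b, B, C}
  | a, C => {a, b, A, C}
  | b, a => {a, b, C}
  | b, b => {b, B}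
  | b, A => {a, b, A, C}
  | b, B => {b, B}
  | b, C => {a, b, B, C}
  | A, a => {a, A}
  | A, b => {a, b, A, C}
  | A, A => {a, A}
  | A, B => {a, b, A, B, C}
  | A, C => {a, b, A, C}
  | B, a => {a, b, B, C}
  | B, b => {b, B}
  | B, A => {a, b, A, B, C}
  | B, B => {b, B}
  | B, C => {a, b, B, C}
  | C, a => {a, b, A, C}
  | C, b => {a, b, B, C}
  | C, A => {a, b, A, C}
  | C, B => {a, b, B, C}
  | C, C => {a, b, A, B, C}

def hopS (S T : Finset Hel) : Finset Hel :=
  S.biUnion fun s => T.biUnion fun t => hop s t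

theorem only_subhypergroups (K : Finset Hel) (hne : K.Nonempty)
    (hK : K ≠ Finset.univ)
    (h : ∀ x ∈ K, hopS {x} K = K ∧ hopS K {x} = K) :
    K = {Hel.a, Hel.A} ∨ K = {Hel.b, Hel.B} := by
  revert hne hK h; revert K; decide
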